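/- Let X, Y : Fin n → ℝ be centered, and define A = min_π (1/n)∑_i X_i Y_{π(i)}, B = max_π (1/n)∑_i X_i Y_{π(i)}, and σ² = Var_π((1/n)∑_i X_i Y_{π(i)}) the variance under a uniformly random permutation π. If X and Y are not identically zero, then A < 0 < B and σ² ≤ −A·B. -/

import Mathlib

/-!
Under a uniformly random permutation `π`, the statistic `S π = (1/n) ∑ᵢ Xᵢ Y_{π i}` has mean zero,
because `∑_π Y (π i)` does not depend on `i` and `X` is centered. It is not identically zero: if
it were, comparing `π` with `π * swap a b` for `X a ≠ X b` would force `Y` to be constant, hence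
zero. A mean-zero, non-zero statistic takes both signs, so `A < 0 < B`, and the Bhatia–Davis
inequality `(S - A)(B - S) ≥ 0`, averaged, gives `Var S ≤ -AB`.
-/

open Finset Equiv

variable {α R : Type*} [Fintype α]

theorem exists_apply_ne_of_sum_eq_zero [CommRing R] [IsDomain R] [CharZero R] {X : α → R}
    (hX : ∑ i, X i = 0) (hX0 : X ≠ 0) : ∃ a b, X a ≠ X b := by
  obtain ⟨a, ha⟩ := Function.ne_iff.1 hX0
  by_contra! hconst
  rw [sum_congr rfl fun i _ => hconst i a, sum_const, smul_eq_zero] at hX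
  exact hX.elim (card_ne_zero_of_mem (mem_univ a)) ha

theorem Finset.sum_sq_le_card_mul_neg_mul [CommRing R] [LinearOrder R] [IsStrictOrderedRing R]
    {ι : Type*} (s : Finset ι) {f : ι → R} {A B : R} (hf : ∑ i ∈ s, f i = 0)
    (hAB : ∀ i ∈ s, f i ∈ Set.Icc A B) : ∑ i ∈ s, f i ^ 2 ≤ #s * -(A * B) :=
  calc ∑ i ∈ s, f i ^ 2 ≤ ∑ i ∈ s, ((A + B) * f i - A * B) := by
        refine sum_le_sum fun i hi => ?_
        obtain ⟨hA, hB⟩ := hAB i hi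
        nlinarith [mul_nonneg (sub_nonneg.2 hA) (sub_nonneg.2 hB)]
    _ = #s * -(A * B) := by
        rw [sum_sub_distrib, ← mul_sum, hf, sum_const, nsmul_eq_mul]
        ring

variable [DecidableEq α]

namespace Equiv.Perm

theorem sum_comp_perm_apply_eq {M : Type*} [AddCommMonoid M] (f : α → M) (i j : α) :
    ∑ σ : Perm α, f (σ i) = ∑ σ : Perm α, f (σ j) :=
  calc ∑ σ : Perm α, f (σ i) = ∑ σ : Perm α, f ((σ * swap i j) i) :=
        (Equiv.sum_comp (Equiv.mulRight (swap i j)) fun σ => f (σ i)).symm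
    _ = ∑ σ : Perm α, f (σ j) := by simp only [Perm.mul_apply, swap_apply_left]

theorem sum_perm_sum_mul_apply_eq_zero [CommSemiring R] {X : α → R} (hX : ∑ i, X i = 0)
    (Y : α → R) : ∑ σ : Perm α, ∑ i, X i * Y (σ i) = 0 := by
  rw [sum_comm]
  simp_rw [← mul_sum]
  rcases isEmpty_or_nonempty α with _ | ⟨⟨i₀⟩⟩
  · simp
  · simp_rw [sum_comp_perm_apply_eq Y _ i₀, ← sum_mul, hX, zero_mul]

theorem sum_mul_apply_mul_swap [CommRing R] (X Y : α → R) (σ : Perm α) {a b : α}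
    (hab : a ≠ b) : ∑ i, X i * Y ((σ * swap a b) i) =
      ∑ i, X i * Y (σ i) - (X a - X b) * (Y (σ a) - Y (σ b)) := by
  simp only [Perm.mul_apply]
  have hdiff : ∑ i, (X i * Y (σ (swap a b i)) - X i * Y (σ i)) =
      ∑ i ∈ {a, b}, (X i * Y (σ (swap a b i)) - X i * Y (σ i)) := by
    refine (sum_subset (subset_univ _) fun i _ hi => ?_).symm
    simp only [mem_insert, mem_singleton, not_or] at hi
    rw [swap_apply_of_ne_of_ne hi.1 hi.2, sub_self]
  rw [sum_sub_distrib, sum_pair hab, swap_apply_left, swap_apply_right] at hdiff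
  linear_combination hdiff

end Equiv.Perm

open Equiv.Perm in
theorem exists_perm_sum_mul_apply_ne_zero [CommRing R] [IsDomain R] [CharZero R] {X Y : α → R}
    (hX : ∑ i, X i = 0) (hX0 : X ≠ 0) (hY : ∑ i, Y i = 0) (hY0 : Y ≠ 0) :
    ∃ σ : Perm α, ∑ i, X i * Y (σ i) ≠ 0 := by
  obtain ⟨a, b, hXab⟩ := exists_apply_ne_of_sum_eq_zero hX hX0
  have hab : a ≠ b := fun h => hXab (h ▸ rfl)
  by_contra! hzero
  have hYσ : ∀ σ : Perm α, Y (σ a) = Y (σ b) := fun σ => by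
    have h := sum_mul_apply_mul_swap X Y σ hab
    rw [hzero, hzero, zero_sub, zero_eq_neg, mul_eq_zero] at h
    exact sub_eq_zero.1 (h.resolve_left (sub_ne_zero.2 hXab))
  -- `swap a c` fixes `b` and moves `a` to `c`
  have hYconst : ∀ c, Y c = Y b := fun c => by
    rcases eq_or_ne c b with rfl | hcb
    · rfl
    · simpa [swap_apply_of_ne_of_ne hab.symm hcb.symm] using hYσ (swap a c)
  obtain ⟨c, d, hcd⟩ := exists_apply_ne_of_sum_eq_zero hY hY0
  exact hcd ((hYconst c).trans (hYconst d).symm)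

theorem stmt_11_general (n : ℕ) (X Y : Fin n → ℝ)
    (hX : ∑ i, X i = 0) (hY : ∑ i, Y i = 0)
    (hX0 : X ≠ 0) (hY0 : Y ≠ 0) (A B σ2 : ℝ)
    (hA : IsLeast (Set.range fun π : Equiv.Perm (Fin n) =>
            (1 / (n : ℝ)) * ∑ i, X i * Y (π i)) A)
    (hB : IsGreatest (Set.range fun π : Equiv.Perm (Fin n) =>
            (1 / (n : ℝ)) * ∑ i, X i * Y (π i)) B)
    (hσ2 : σ2 = (∑ π : Equiv.Perm (Fin n),
        (((1 / (n : ℝ)) * ∑ i, X i * Y (π i))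
          - (∑ σ : Equiv.Perm (Fin n), (1 / (n : ℝ)) * ∑ i, X i * Y (σ i))
              / (Nat.factorial n : ℝ)) ^ 2) / (Nat.factorial n : ℝ)) :
    A < 0 ∧ 0 < B ∧ σ2 ≤ -(A * B) := by
  set S : Perm (Fin n) → ℝ := fun π => (1 / (n : ℝ)) * ∑ i, X i * Y (π i)
  have hmean : ∑ π, S π = 0 := by
    simp only [S, ← mul_sum, Perm.sum_perm_sum_mul_apply_eq_zero hX, mul_zero]
  obtain ⟨π₀, hπ₀⟩ := exists_perm_sum_mul_apply_ne_zero hX hX0 hY hY0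
  obtain ⟨i, -, -⟩ := exists_ne_zero_of_sum_ne_zero hπ₀
  have hS₀ : S π₀ ≠ 0 := mul_ne_zero (by simpa using i.pos.ne') hπ₀
  obtain ⟨πp, -, hp⟩ := exists_pos_of_sum_zero_of_exists_nonzero S hmean ⟨π₀, mem_univ _, hS₀⟩
  obtain ⟨πm, -, hm⟩ := exists_pos_of_sum_zero_of_exists_nonzero (-S)
    (by simp [sum_neg_distrib, hmean]) ⟨π₀, mem_univ _, neg_ne_zero.2 hS₀⟩
  refine ⟨(hA.2 ⟨πm, rfl⟩).trans_lt (neg_pos.1 hm), hp.trans_le (hB.2 ⟨πp, rfl⟩), ?_⟩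
  have hcard : #(univ : Finset (Perm (Fin n))) = Nat.factorial n := by
    rw [card_univ, Fintype.card_perm, Fintype.card_fin]
  simp only [hσ2, hmean, zero_div, sub_zero]
  rw [div_le_iff₀ (by positivity), mul_comm, ← hcard]
  exact sum_sq_le_card_mul_neg_mul univ hmean fun π _ => ⟨hA.2 ⟨π, rfl⟩, hB.2 ⟨π, rfl⟩⟩

theorem stmt_11 (n : ℕ) (hn : 2 ≤ n) (X Y : Fin n → ℝ)
    (hX : ∑ i, X i = 0) (hY : ∑ i, Y i = 0)
    (hX0 : X ≠ 0) (hY0 : Y ≠ 0) (A B σ2 : ℝ)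
    (hA : IsLeast (Set.range fun π : Equiv.Perm (Fin n) =>
            (1 / (n : ℝ)) * ∑ i, X i * Y (π i)) A)
    (hB : IsGreatest (Set.range fun π : Equiv.Perm (Fin n) =>
            (1 / (n : ℝ)) * ∑ i, X i * Y (π i)) B)
    (hσ2 : σ2 = (∑ π : Equiv.Perm (Fin n),
        (((1 / (n : ℝ)) * ∑ i, X i * Y (π i))
          - (∑ σ : Equiv.Perm (Fin n), (1 / (n : ℝ)) * ∑ i, X i * Y (σ i))
              / (Nat.factorial n : ℝ)) ^ 2) / (Nat.factorial n : ℝ)) :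
    A < 0 ∧ 0 < B ∧ σ2 ≤ -(A * B) :=
  stmt_11_general n X Y hX hY hX0 hY0 A B σ2 hA hB hσ2
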